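/- For every index i with 1 ≤ i ≤ r, one has 0 ≤ x̄^h_{i−1+m} − x̄^h_{i−1−m} ≤ x_{(i−1+m)} − x_{(i−1−m)}; that is, the difference of the two block harmonic means is nonnegative and is bounded above by the corresponding difference of order statistics. -/

import Mathlib

open Finset

/-- The harmonic mean of the values of `x` over a finite index set `s`:
`card s / ∑_{j ∈ s} 1 / x j`. -/
noncomputable def hMean (x : ℤ → ℝ) (s : Finset ℤ) : ℝ :=
  (s.card : ℝ) / ∑ j ∈ s, (x j)⁻¹

/-- `x̄^h_{i-1+m}`: the harmonic mean of `x i, x (i+1), …, x (i-1+m)`. -/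
noncomputable def hUp (x : ℤ → ℝ) (m i : ℤ) : ℝ :=
  hMean x (Finset.Icc i (i - 1 + m))

/-- `x̄^h_{i-1-m}`: the harmonic mean of `x (i-1-m), x (i-m), …, x i`. -/
noncomputable def hDown (x : ℤ → ℝ) (m i : ℤ) : ℝ :=
  hMean x (Finset.Icc (i - 1 - m) i)

/-!
Being constant outside `[1, r]`, the sequence `x` is the extension of its restriction to `[1, r]`
by clamping, hence monotone and positive on all of `ℤ`. Both block harmonic means are harmonic
means of `x` over an integer interval, so each lies between the values of `x` at the endpoints
of its interval. The two intervals `[i - 1 - m, i]` and `[i, i - 1 + m]` meet at `i`, whence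
`x (i - 1 - m) ≤ x̄^h_{i-1-m} ≤ x i ≤ x̄^h_{i-1+m} ≤ x (i - 1 + m)`.
-/

section HarmonicMean

variable {x : ℤ → ℝ} {s : Finset ℤ}

lemma le_hMean {a : ℝ} (hs : s.Nonempty) (ha : 0 < a) (h : ∀ j ∈ s, a ≤ x j) :
    a ≤ hMean x s := by
  have hsum : 0 < ∑ j ∈ s, (x j)⁻¹ :=
    sum_pos (fun j hj => inv_pos.2 (ha.trans_le (h j hj))) hs
  rw [hMean, le_div_iff₀ hsum]
  calc a * ∑ j ∈ s, (x j)⁻¹ = ∑ j ∈ s, a * (x j)⁻¹ := mul_sum _ _ _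
    _ ≤ ∑ _j ∈ s, (1 : ℝ) :=
      sum_le_sum fun j hj => mul_inv_le_one_of_le₀ (h j hj) (ha.trans_le (h j hj)).le
    _ = s.card := by simp

lemma hMean_le {b : ℝ} (hs : s.Nonempty) (hpos : ∀ j ∈ s, 0 < x j) (h : ∀ j ∈ s, x j ≤ b) :
    hMean x s ≤ b := by
  have hsum : 0 < ∑ j ∈ s, (x j)⁻¹ := sum_pos (fun j hj => inv_pos.2 (hpos j hj)) hs
  rw [hMean, div_le_iff₀ hsum]
  calc (s.card : ℝ) = ∑ _j ∈ s, (1 : ℝ) := by simp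
    _ ≤ ∑ j ∈ s, b * (x j)⁻¹ :=
      sum_le_sum fun j hj => (le_mul_inv_iff₀ (hpos j hj)).2 ((one_mul _).trans_le (h j hj))
    _ = b * ∑ j ∈ s, (x j)⁻¹ := (mul_sum _ _ _).symm

lemma hMean_Icc_mem_Icc (hx : Monotone x) {a b : ℤ} (hab : a ≤ b) (ha : 0 < x a) :
    hMean x (Icc a b) ∈ Set.Icc (x a) (x b) :=
  ⟨le_hMean (nonempty_Icc.2 hab) ha fun _ hj => hx (mem_Icc.1 hj).1,
    hMean_le (nonempty_Icc.2 hab) (fun _ hj => ha.trans_le (hx (mem_Icc.1 hj).1))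
      fun _ hj => hx (mem_Icc.1 hj).2⟩

end HarmonicMean

theorem block_harmonic_means_difference_bounds_general
    (r m : ℕ) (hr : 1 ≤ r)
    (hm : 2 ≤ m)
    (x : ℤ → ℝ)
    (hx_pos : ∀ j : ℤ, 1 ≤ j → j ≤ (r : ℤ) → 0 < x j)
    (hx_mono : ∀ j l : ℤ, 1 ≤ j → j < l → l ≤ (r : ℤ) → x j < x l)
    (hx_low : ∀ j : ℤ, j < 1 → x j = x 1)
    (hx_high : ∀ j : ℤ, (r : ℤ) < j → x j = x r) :
    ∀ i : ℤ, 1 ≤ i → i ≤ (r : ℤ) →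
      0 ≤ hUp x m i - hDown x m i ∧
      hUp x m i - hDown x m i ≤ x (i - 1 + m) - x (i - 1 - m) := by
  have hr' : (1 : ℤ) ≤ r := by exact_mod_cast hr
  have hx : Set.IccExtend hr' (x ∘ (↑)) = x := Set.IccExtend_eq_self hr' x hx_low hx_high
  have hmono : Monotone x := hx ▸ Monotone.IccExtend hr'
    (StrictMono.monotone fun j l hjl => hx_mono j l j.2.1 hjl l.2.2)
  have hpos (j : ℤ) : 0 < x j := by
    rw [← hx, Set.IccExtend_apply]
    exact hx_pos _ (Set.projIcc (1 : ℤ) r hr' j).2.1 (Set.projIcc (1 : ℤ) r hr' j).2.2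
  intro i _ _
  obtain ⟨hU₁, hU₂⟩ := hMean_Icc_mem_Icc hmono (a := i) (b := i - 1 + m) (by omega) (hpos _)
  obtain ⟨hD₁, hD₂⟩ := hMean_Icc_mem_Icc hmono (a := i - 1 - m) (b := i) (by omega) (hpos _)
  unfold hUp hDown
  constructor <;> linarith

/-- for every `1 ≤ i ≤ r`,
`0 ≤ x̄^h_{i-1+m} − x̄^h_{i-1-m} ≤ x_(i-1+m) − x_(i-1-m)`. -/
theorem block_harmonic_means_difference_bounds
    (n r m : ℕ) (hn : 1 ≤ n) (hr : 1 ≤ r) (hrn : r ≤ n)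
    (hm : 2 ≤ m) (hmr : 2 * m < r)
    (x : ℤ → ℝ)
    (hx_pos : ∀ j : ℤ, 1 ≤ j → j ≤ (r : ℤ) → 0 < x j)
    (hx_mono : ∀ j l : ℤ, 1 ≤ j → j < l → l ≤ (r : ℤ) → x j < x l)
    (hx_low : ∀ j : ℤ, j < 1 → x j = x 1)
    (hx_high : ∀ j : ℤ, (r : ℤ) < j → x j = x r) :
    ∀ i : ℤ, 1 ≤ i → i ≤ (r : ℤ) →
      0 ≤ hUp x m i - hDown x m i ∧
      hUp x m i - hDown x m i ≤ x (i - 1 + m) - x (i - 1 - m) :=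
  block_harmonic_means_difference_bounds_general r m hr hm x hx_pos hx_mono hx_low hx_high
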